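/- arXiv:2306.06533 — 2 statements merged into one kernel-verified Lean document; each statement's English description precedes it below -/
import Mathlib

section
/- The presented group G₃ on three generators x₁, x₂, x₃ with relators r₁ = x₁x₂x₁x₂⁻¹x₁⁻¹x₂⁻¹, r₂ = x₂⁻¹x₃⁻¹x₂⁻¹x₃x₂x₃, and r₃ = x₁⁻¹x₂x₃⁻¹ is a nontrivial group. -/
/-- The relators of the presented group `G₃ = ⟨x₁, x₂, x₃ | r₁, r₂, r₃⟩`,
where `r₁ = x₁x₂x₁x₂⁻¹x₁⁻¹x₂⁻¹`, `r₂ = x₂⁻¹x₃⁻¹x₂⁻¹x₃x₂x₃`, `r₃ = x₁⁻¹x₂x₃⁻¹`. -/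
def relsG₃ : Set (FreeGroup (Fin 3)) :=
  letI x₁ := FreeGroup.of (0 : Fin 3)
  letI x₂ := FreeGroup.of (1 : Fin 3)
  letI x₃ := FreeGroup.of (2 : Fin 3)
  {x₁ * x₂ * x₁ * x₂⁻¹ * x₁⁻¹ * x₂⁻¹,
   x₂⁻¹ * x₃⁻¹ * x₂⁻¹ * x₃ * x₂ * x₃,
   x₁⁻¹ * x₂ * x₃⁻¹}

/-- A map of the generators into `S₅` that kills all relators of `G₃`. -/
def fG₃ : Fin 3 → Equiv.Perm (Fin 5) :=
  ![⟨![1,2,3,4,0], ![4,0,1,2,3], by decide, by decide⟩,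
    ⟨![2,0,4,1,3], ![1,3,0,4,2], by decide, by decide⟩,
    ⟨![1,4,3,0,2], ![3,0,4,2,1], by decide, by decide⟩]

lemma fG₃_rels : ∀ r ∈ relsG₃, FreeGroup.lift fG₃ r = 1 := by
  intro r hr
  rcases hr with h | h | h <;> subst h <;>
    simp only [map_mul, map_inv, FreeGroup.lift_apply_of] <;> decide

/-- **Proposition 3.8** (group-theoretic content): the presented group
`G₃ = ⟨x₁, x₂, x₃ | x₁x₂x₁x₂⁻¹x₁⁻¹x₂⁻¹, x₂⁻¹x₃⁻¹x₂⁻¹x₃x₂x₃, x₁⁻¹x₂x₃⁻¹⟩`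
is nontrivial. -/
theorem presentedGroupG₃_nontrivial : Nontrivial (PresentedGroup relsG₃) := by
  refine ⟨PresentedGroup.of 1, 1, fun h => ?_⟩
  have := congrArg (PresentedGroup.toGroup fG₃_rels) h
  rw [PresentedGroup.toGroup.of, map_one] at this
  exact absurd this (by decide)
end

section
/- The presented group G₂ on generators x₁, x₂ with relators x₁x₂x₁x₂⁻¹x₁⁻¹x₂⁻¹ and x₂⁻²x₁x₂⁻¹x₁⁻¹x₂²x₁⁻¹x₂ is isomorphic to the presented group H on generators a, b with relators a²b⁻³ and ab⁻²ab⁻¹ab⁻¹a⁻¹b²a⁻¹b²a⁻¹ba⁻¹, via the substitution x₁ ↦ ab⁻¹, x₂ ↦ b²a⁻¹ (with inverse a = x₁x₂x₁, b = x₂x₁). -/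
/-- The relators of the presented group
`G₂ = ⟨x₁, x₂ | x₁x₂x₁x₂⁻¹x₁⁻¹x₂⁻¹, x₂⁻²x₁x₂⁻¹x₁⁻¹x₂²x₁⁻¹x₂⟩`. -/
def relsG₂ : Set (FreeGroup (Fin 2)) :=
  letI x₁ := FreeGroup.of (0 : Fin 2)
  letI x₂ := FreeGroup.of (1 : Fin 2)
  {x₁ * x₂ * x₁ * x₂⁻¹ * x₁⁻¹ * x₂⁻¹,
   x₂⁻¹ * x₂⁻¹ * x₁ * x₂⁻¹ * x₁⁻¹ * x₂ * x₂ * x₁⁻¹ * x₂}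

/-- The relators of the presented group
`H = ⟨a, b | a²b⁻³, ab⁻²ab⁻¹ab⁻¹a⁻¹b²a⁻¹b²a⁻¹ba⁻¹⟩`. -/
def relsH : Set (FreeGroup (Fin 2)) :=
  letI a := FreeGroup.of (0 : Fin 2)
  letI b := FreeGroup.of (1 : Fin 2)
  {a * a * b⁻¹ * b⁻¹ * b⁻¹,
   a * b⁻¹ * b⁻¹ * a * b⁻¹ * a * b⁻¹ * a⁻¹ * b * b * a⁻¹ * b * b * a⁻¹ * b * a⁻¹}

/-!
The substitution `x₁ ↦ ab⁻¹, x₂ ↦ b²a⁻¹` is already an automorphism of the free group on two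
letters, with inverse `a ↦ x₁x₂x₁, b ↦ x₂x₁`. It sends the first relator of `G₂` to `a²b⁻³` and
the second to the conjugate of the second relator of `H` by `ab⁻²`, so the two relator sets
have the same normal closure and the automorphism descends to the presented groups.
-/

theorem Subgroup.normalClosure_insert_conj {G : Type*} [Group G] (g x : G) (s : Set G) :
    normalClosure (insert (g * x * g⁻¹) s) = normalClosure (insert x s) := by
  have hs {y : G} : s ⊆ normalClosure (insert y s) :=
    (Set.subset_insert _ _).trans subset_normalClosure
  apply le_antisymm <;> refine normalClosure_le_normal (Set.insert_subset_iff.mpr ⟨?_, hs⟩)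
  · exact normalClosure_normal.conj_mem x (subset_normalClosure (Set.mem_insert _ _)) g
  · simpa [mul_assoc] using normalClosure_normal.conj_mem (g * x * g⁻¹)
      (subset_normalClosure (Set.mem_insert _ s)) g⁻¹

namespace PresentedGroup

variable {α β : Type*} {rels₁ : Set (FreeGroup α)} {rels₂ : Set (FreeGroup β)}

def equivOfFreeGroupEquiv (e : FreeGroup α ≃* FreeGroup β)
    (he : Subgroup.normalClosure (e '' rels₁) = Subgroup.normalClosure rels₂) :
    PresentedGroup rels₁ ≃* PresentedGroup rels₂ :=
  QuotientGroup.congr _ _ e <| he ▸ Subgroup.map_normalClosure rels₁ e.toMonoidHom e.surjective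

variable (e : FreeGroup α ≃* FreeGroup β)
  (he : Subgroup.normalClosure (e '' rels₁) = Subgroup.normalClosure rels₂)

@[simp]
theorem equivOfFreeGroupEquiv_mk (x : FreeGroup α) :
    equivOfFreeGroupEquiv e he (mk rels₁ x) = mk rels₂ (e x) :=
  rfl

@[simp]
theorem equivOfFreeGroupEquiv_symm_mk (x : FreeGroup β) :
    (equivOfFreeGroupEquiv e he).symm (mk rels₂ x) = mk rels₁ (e.symm x) :=
  rfl

end PresentedGroup

open FreeGroup (of lift)

def changeOfGenerators : FreeGroup (Fin 2) ≃* FreeGroup (Fin 2) :=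
  MonoidHom.toMulEquiv
    (lift ![of 0 * (of 1)⁻¹, of 1 * of 1 * (of 0)⁻¹])
    (lift ![of 0 * of 1 * of 0, of 1 * of 0])
    (by ext i; fin_cases i <;> simp; group)
    (by ext i; fin_cases i <;> simp; group)

@[simp]
theorem changeOfGenerators_of_zero : changeOfGenerators (of 0) = of 0 * (of 1)⁻¹ := by
  simp [changeOfGenerators]

@[simp]
theorem changeOfGenerators_of_one : changeOfGenerators (of 1) = of 1 * of 1 * (of 0)⁻¹ := by
  simp [changeOfGenerators]

@[simp]
theorem changeOfGenerators_symm_of_zero : changeOfGenerators.symm (of 0) = of 0 * of 1 * of 0 := by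
  simp [changeOfGenerators]

@[simp]
theorem changeOfGenerators_symm_of_one : changeOfGenerators.symm (of 1) = of 1 * of 0 := by
  simp [changeOfGenerators]

theorem changeOfGenerators_image_relsG₂ :
    changeOfGenerators '' relsG₂ =
      letI a := of (0 : Fin 2)
      letI b := of (1 : Fin 2)
      {a * a * b⁻¹ * b⁻¹ * b⁻¹,
       (a * b⁻¹ * b⁻¹) *
         (a * b⁻¹ * b⁻¹ * a * b⁻¹ * a * b⁻¹ * a⁻¹ * b * b * a⁻¹ * b * b * a⁻¹ * b * a⁻¹) *
         (a * b⁻¹ * b⁻¹)⁻¹} := by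
  simp only [relsG₂, Set.image_insert_eq, Set.image_singleton, map_mul, map_inv,
    changeOfGenerators_of_zero, changeOfGenerators_of_one]
  refine congrArg₂ (fun r r' ↦ ({r, r'} : Set _)) ?_ ?_ <;> rw [← mul_inv_eq_one] <;> group

theorem normalClosure_changeOfGenerators_image_relsG₂ :
    Subgroup.normalClosure (changeOfGenerators '' relsG₂) = Subgroup.normalClosure relsH := by
  rw [changeOfGenerators_image_relsG₂, Set.pair_comm, Subgroup.normalClosure_insert_conj,
    Set.pair_comm, relsH]

/-- Change of generators `x₁ = ab⁻¹`, `x₂ = b²a⁻¹` (with inverse `a = x₁x₂x₁`,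
`b = x₂x₁`): the presented group `G₂` is isomorphic to the presented group `H`. -/
theorem presentedGroupG₂_iso_presentedGroupH :
    ∃ e : PresentedGroup relsG₂ ≃* PresentedGroup relsH,
      e (PresentedGroup.of 0) =
        PresentedGroup.of 0 * (PresentedGroup.of 1)⁻¹ ∧
      e (PresentedGroup.of 1) =
        PresentedGroup.of 1 * PresentedGroup.of 1 * (PresentedGroup.of 0)⁻¹ ∧
      e.symm (PresentedGroup.of 0) =
        PresentedGroup.of 0 * PresentedGroup.of 1 * PresentedGroup.of 0 ∧
      e.symm (PresentedGroup.of 1) =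
        PresentedGroup.of 1 * PresentedGroup.of 0 := by
  refine ⟨PresentedGroup.equivOfFreeGroupEquiv changeOfGenerators
    normalClosure_changeOfGenerators_image_relsG₂, ?_, ?_, ?_, ?_⟩ <;>
    simp [PresentedGroup.of]
end
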